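/- arXiv:2507.09991 — 10 statements merged into one kernel-verified Lean document; each statement's English description precedes it below -/
import Mathlib

section
/- Let f(x) = (x^2 + b_1 x + c_1)(x^2 + b_2 x + c_2) be a square-free quartic polynomial over F_q. Set Δ_1 = b_1^2 - 4c_1, Δ_2 = b_2^2 - 4c_2, and B = 4(c_1 + c_2) - 2 b_1 b_2. Then ∑_{x ∈ F_q} σ(f(x)) = -1 + ∑_{x ∈ F_q} σ(x^3 + B x^2 + Δ_1 Δ_2 x). -/
/-!
Summing `σ(q₁ q₂) = ∑ₜ σ(t) [q₂(x) = t q₁(x)]` over `x` turns the left side into `∑ₜ σ(t) Nₜ`,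
where `Nₜ` counts the roots of the pencil member `q₂ - t q₁`. For `t ≠ 1` this is a genuine
quadratic and `Nₜ = 1 + σ(D t)`, `D t` its discriminant; for `t = 1` it is linear and, as
`q₁ ≠ q₂`, `N₁ = σ(D 1)`. Since `∑_{t ≠ 1} σ(t) = -1`, the sum is `-1 + ∑ₜ σ(t D t)`, and
`t D t = Δ₁ t³ + B t² + Δ₂ t` becomes the stated cubic under `x = Δ₁ t`.
-/

open Polynomial Finset

section Counting

variable {F : Type*} [Field F] [Fintype F] [DecidableEq F]

theorem card_roots_quadratic_of_ne_zero (hF : ringChar F ≠ 2) {a : F} (ha : a ≠ 0) (b c : F) :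
    (#{x | a * (x * x) + b * x + c = 0} : ℤ) = quadraticChar F (discrim a b c) + 1 := by
  have : NeZero (2 : F) := ⟨Ring.two_ne_zero hF⟩
  rw [← quadraticChar_card_sqrts hF]
  congr 1
  simp_rw [quadratic_eq_zero_iff_discrim_eq_sq ha]
  refine card_bij' (fun x _ => 2 * a * x + b) (fun y _ => (y - b) / (2 * a)) ?_ ?_ ?_ ?_
  · intro x hx
    simpa [eq_comm] using hx
  · intro y hy
    simp only [Set.mem_toFinset, Set.mem_ofPred_eq] at hy
    simp only [mem_filter, mem_univ, true_and]
    field_simp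
    rw [sub_add_cancel, hy]
  · intro x _
    field_simp
    ring
  · intro y _
    field_simp
    ring

theorem card_roots_linear {b c : F} (h : b ≠ 0 ∨ c ≠ 0) :
    (#{x | b * x + c = 0} : ℤ) = quadraticChar F (b ^ 2) := by
  by_cases hb : b = 0
  · have hc : c ≠ 0 := h.resolve_left (not_not.mpr hb)
    simp [hb, hc]
  · have : ({x | b * x + c = 0} : Finset F) = {-c / b} := by
      ext x
      simp only [mem_filter, mem_univ, true_and, mem_singleton]
      rw [eq_div_iff hb]
      constructor <;> intro h <;> linear_combination h
    simp [this, quadraticChar_sq_one' hb]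

theorem card_roots_quadratic (hF : ringChar F ≠ 2) {a b c : F} (h : a ≠ 0 ∨ b ≠ 0 ∨ c ≠ 0) :
    (#{x | a * (x * x) + b * x + c = 0} : ℤ) =
      quadraticChar F (discrim a b c) + if a = 0 then 0 else 1 := by
  by_cases ha : a = 0
  · simp only [ha, zero_mul, zero_add, if_true, add_zero, discrim, mul_zero, sub_zero]
    exact card_roots_linear (h.resolve_left (not_not.mpr ha))
  · rw [if_neg ha, card_roots_quadratic_of_ne_zero hF ha]

theorem quadraticChar_mul_eq_sum (hF : ringChar F ≠ 2) (u v : F) :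
    quadraticChar F (u * v) = ∑ t, if v = t * u then quadraticChar F t else 0 := by
  by_cases hu : u = 0
  · by_cases hv : v = 0 <;> simp only [hu, hv, mul_zero, zero_mul, if_true, if_false,
      MulChar.map_zero, quadraticChar_sum_zero hF, sum_const_zero]
  · have hv : ∀ t, v = t * u ↔ t = v / u := fun t => by rw [eq_div_iff hu, eq_comm]
    rw [sum_congr rfl fun t _ => if_congr (hv t) rfl rfl, sum_ite_eq' univ, if_pos (mem_univ _),
      show u * v = v / u * u ^ 2 by field_simp, map_mul, quadraticChar_sq_one' hu, mul_one]

theorem sum_quadraticChar_mul_eq_sum_card (hF : ringChar F ≠ 2) {ι : Type*} [Fintype ι]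
    (f g : ι → F) :
    ∑ x, quadraticChar F (f x * g x) = ∑ t, quadraticChar F t * #{x | g x = t * f x} := by
  simp_rw [quadraticChar_mul_eq_sum hF]
  rw [sum_comm]
  refine sum_congr rfl fun t _ => ?_
  rw [← sum_filter, sum_const, nsmul_eq_mul, mul_comm]

theorem sum_quadraticChar_ne_one (hF : ringChar F ≠ 2) :
    ∑ t : F, (if t = 1 then 0 else quadraticChar F t) = -1 := by
  rw [sum_ite, sum_const_zero, zero_add, filter_ne', sum_erase_eq_sub (mem_univ _),
    quadraticChar_sum_zero hF, map_one, zero_sub]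

theorem sum_quadraticChar_mul_monic_quadratics (hF : ringChar F ≠ 2) {b₁ c₁ b₂ c₂ : F}
    (hne : (b₁, c₁) ≠ (b₂, c₂)) :
    ∑ x, quadraticChar F ((x ^ 2 + b₁ * x + c₁) * (x ^ 2 + b₂ * x + c₂)) =
      -1 + ∑ t, quadraticChar F (t * discrim (1 - t) (b₂ - t * b₁) (c₂ - t * c₁)) := by
  rw [sum_quadraticChar_mul_eq_sum_card hF, ← sum_quadraticChar_ne_one hF, ← sum_add_distrib]
  refine sum_congr rfl fun t _ => ?_
  have hpencil : (1 - t ≠ 0) ∨ (b₂ - t * b₁ ≠ 0) ∨ (c₂ - t * c₁ ≠ 0) := by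
    by_contra! h
    obtain ⟨h1, hb, hc⟩ := h
    exact hne (Prod.ext_iff.mpr
      ⟨by linear_combination b₁ * h1 - hb, by linear_combination c₁ * h1 - hc⟩)
  have hfibre : #{x | x ^ 2 + b₂ * x + c₂ = t * (x ^ 2 + b₁ * x + c₁)} =
      #{x | (1 - t) * (x * x) + (b₂ - t * b₁) * x + (c₂ - t * c₁) = 0} := by
    congr 1
    refine filter_congr fun x _ => ⟨fun h => ?_, fun h => ?_⟩ <;> linear_combination h
  rw [hfibre, card_roots_quadratic hF hpencil, map_mul]
  simp only [sub_eq_zero, @eq_comm F 1 t]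
  split_ifs <;> ring

end Counting

theorem sum_quadraticChar_cubic_scale {F : Type*} [Field F] [Fintype F] [DecidableEq F] {a : F}
    (ha : a ≠ 0) (B c : F) :
    ∑ t, quadraticChar F (a * t ^ 3 + B * t ^ 2 + c * t) =
      ∑ x, quadraticChar F (x ^ 3 + B * x ^ 2 + a * c * x) := by
  refine Fintype.sum_bijective (a * ·) (Equiv.mulLeft₀ a ha).bijective _ _ fun t => ?_
  rw [show (a * t) ^ 3 + B * (a * t) ^ 2 + a * c * (a * t) =
      a ^ 2 * (a * t ^ 3 + B * t ^ 2 + c * t) by ring,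
    map_mul, quadraticChar_sq_one' ha, one_mul]

section Squarefree

variable {F : Type*} [Field F]

theorem discrim_ne_zero_of_squarefree (hF : ringChar F ≠ 2) {b c : F}
    (hsf : Squarefree (X ^ 2 + C b * X + C c : F[X])) : discrim 1 b c ≠ 0 := by
  have h2 : (2 : F) ≠ 0 := Ring.two_ne_zero hF
  obtain ⟨r, rfl⟩ : ∃ r, b = 2 * r := ⟨b / 2, by field_simp⟩
  intro h
  have hc : c = r ^ 2 := by
    refine mul_left_cancel₀ (mul_ne_zero h2 h2) ?_
    rw [discrim] at h
    linear_combination -h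
  refine not_isUnit_X_add_C r (hsf _ (dvd_of_eq ?_))
  rw [hc, C_mul, C_pow, map_ofNat]
  ring

theorem ne_of_squarefree_mul_quadratics {b₁ c₁ b₂ c₂ : F}
    (hsf : Squarefree ((X ^ 2 + C b₁ * X + C c₁) * (X ^ 2 + C b₂ * X + C c₂) : F[X])) :
    (b₁, c₁) ≠ (b₂, c₂) := by
  intro h
  obtain ⟨rfl, rfl⟩ := Prod.mk.inj h
  have hdeg := natDegree_eq_zero_of_isUnit (hsf _ dvd_rfl)
  have : (X ^ 2 + C b₁ * X + C c₁ : F[X]).natDegree = 2 := by compute_degree!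
  omega

end Squarefree

theorem quartic_product_descent_general {F : Type*} [Field F] [Fintype F] [DecidableEq F]
    (h2 : ringChar F ≠ 2) (b₁ c₁ b₂ c₂ : F)
    (hsf : Squarefree ((X ^ 2 + C b₁ * X + C c₁) * (X ^ 2 + C b₂ * X + C c₂) : F[X])) :
    ∑ x : F, quadraticChar F ((x ^ 2 + b₁ * x + c₁) * (x ^ 2 + b₂ * x + c₂)) =
      -1 + ∑ x : F, quadraticChar F
        (x ^ 3 + (4 * (c₁ + c₂) - 2 * b₁ * b₂) * x ^ 2 +
          (b₁ ^ 2 - 4 * c₁) * (b₂ ^ 2 - 4 * c₂) * x) := by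
  have hΔ₁ : discrim 1 b₁ c₁ ≠ 0 := discrim_ne_zero_of_squarefree h2 hsf.of_mul_left
  have hcubic : ∀ t : F, t * discrim (1 - t) (b₂ - t * b₁) (c₂ - t * c₁) =
      discrim 1 b₁ c₁ * t ^ 3 + (4 * (c₁ + c₂) - 2 * b₁ * b₂) * t ^ 2 + discrim 1 b₂ c₂ * t :=
    fun t => by simp only [discrim]; ring
  rw [sum_quadraticChar_mul_monic_quadratics h2 (ne_of_squarefree_mul_quadratics hsf),
    sum_congr rfl fun t _ => congrArg _ (hcubic t), sum_quadraticChar_cubic_scale hΔ₁]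
  simp only [discrim, mul_one]

theorem quartic_product_descent {F : Type*} [Field F] [Fintype F] [DecidableEq F]
    (h2 : ringChar F ≠ 2) (h3 : ringChar F ≠ 3) (b₁ c₁ b₂ c₂ : F)
    (hsf : Squarefree ((X ^ 2 + C b₁ * X + C c₁) * (X ^ 2 + C b₂ * X + C c₂) : F[X])) :
    ∑ x : F, quadraticChar F ((x ^ 2 + b₁ * x + c₁) * (x ^ 2 + b₂ * x + c₂)) =
      -1 + ∑ x : F, quadraticChar F
        (x ^ 3 + (4 * (c₁ + c₂) - 2 * b₁ * b₂) * x ^ 2 +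
          (b₁ ^ 2 - 4 * c₁) * (b₂ ^ 2 - 4 * c₂) * x) :=
  quartic_product_descent_general h2 b₁ c₁ b₂ c₂ hsf
end

section
/- Let f(x) = x^4 + a_3 x^3 + a_2 x^2 + a_1 x + a_0 be a square-free quartic polynomial over F_q, and let g(x) = x^3 + a_2 x^2 + (a_1 a_3 - 4 a_0) x + a_0 (a_3^2 - 4 a_2) + a_1^2. Then ∑_{x ∈ F_q} σ(f(x)) = -1 + ∑_{x ∈ F_q} σ(g(x)). -/
/-!
Double counting. Write f for the quartic and g for the cubic, and count the pairs (x, z) with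
(z - 2x² - a₃x)² = 4 f(x). For fixed x there are σ(f(x)) + 1 values of z. For fixed z the
equation is the quadratic (a₃² - 4a₂ - 4z)x² - (2a₃z + 4a₁)x + (z² - 4a₀) = 0 in x, whose
discriminant is 16 g(z); it has σ(g(z)) + 1 roots, except for the single z at which its
leading coefficient vanishes, where it has σ(g(z)) roots. No member of this pencil of
quadratics vanishes identically, since otherwise f would be the square of x² + (a₃/2)x - z/2.
Comparing the two counts gives the identity.
-/

open Polynomial Finset

lemma four_ne_zero_of_ringChar_ne_two {R : Type*} [Ring R] [Nontrivial R] [NoZeroDivisors R]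
    (h2 : ringChar R ≠ 2) : (4 : R) ≠ 0 := by
  rw [show (4 : R) = 2 ^ 2 by norm_num]
  exact pow_ne_zero 2 (Ring.two_ne_zero h2)

section QuadraticCounts

variable {F : Type*} [Field F] [Fintype F] [DecidableEq F]

lemma quadraticChar_sq_mul {a : F} (ha : a ≠ 0) (c : F) :
    quadraticChar F (a ^ 2 * c) = quadraticChar F c := by
  rw [map_mul, quadraticChar_sq_one' ha, one_mul]

lemma sum_ite_sq_eq (h2 : ringChar F ≠ 2) (c : F) :
    ∑ w : F, (if w ^ 2 = c then (1 : ℤ) else 0) = quadraticChar F c + 1 := by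
  rw [sum_boole, ← quadraticChar_card_sqrts h2 c]
  norm_cast
  congr 1
  ext x
  simp

lemma sum_ite_linear_eq_zero {B : F} (hB : B ≠ 0) (C : F) :
    ∑ x : F, (if B * x + C = 0 then (1 : ℤ) else 0) = 1 := by
  have hroot (x : F) : B * x + C = 0 ↔ x = -C / B := by
    rw [eq_div_iff hB]
    constructor <;> intro h <;> linear_combination h
  simp_rw [hroot, sum_ite_eq', mem_univ, if_true]

lemma sum_ite_quadratic_eq_zero_of_ne_zero (h2 : ringChar F ≠ 2) {A : F} (hA : A ≠ 0) (B C : F) :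
    ∑ x : F, (if A * x ^ 2 + B * x + C = 0 then (1 : ℤ) else 0) =
      quadraticChar F (B ^ 2 - 4 * A * C) + 1 := by
  have htwo : (2 : F) ≠ 0 := Ring.two_ne_zero h2
  have h2A : 2 * A ≠ 0 := mul_ne_zero htwo hA
  have hsq (x : F) : A * x ^ 2 + B * x + C = 0 ↔ (2 * A * x + B) ^ 2 = B ^ 2 - 4 * A * C := by
    rw [← sub_eq_zero (a := (2 * A * x + B) ^ 2),
      show (2 * A * x + B) ^ 2 - (B ^ 2 - 4 * A * C) = 2 * (2 * A) * (A * x ^ 2 + B * x + C) by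
        ring,
      mul_eq_zero, or_iff_right (mul_ne_zero htwo h2A)]
  simp_rw [hsq]
  rw [← sum_ite_sq_eq h2]
  exact ((Equiv.mulLeft₀ (2 * A) h2A).trans (Equiv.addRight B)).sum_comp
    (fun w : F => if w ^ 2 = B ^ 2 - 4 * A * C then (1 : ℤ) else 0)

lemma sum_ite_quadratic_eq_zero (h2 : ringChar F ≠ 2) {A B C : F}
    (hABC : A ≠ 0 ∨ B ≠ 0 ∨ C ≠ 0) :
    ∑ x : F, (if A * x ^ 2 + B * x + C = 0 then (1 : ℤ) else 0) =
      quadraticChar F (B ^ 2 - 4 * A * C) + 1 - if A = 0 then 1 else 0 := by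
  by_cases hA : A = 0
  · subst hA
    by_cases hB : B = 0
    · subst hB
      have hC : C ≠ 0 := by simpa using hABC
      simp [hC]
    · simp [sum_ite_linear_eq_zero hB, quadraticChar_sq_one' hB]
  · rw [sum_ite_quadratic_eq_zero_of_ne_zero h2 hA, if_neg hA, sub_zero]

lemma sum_ite_sub_sq_eq_four_mul (h2 : ringChar F ≠ 2) (u c : F) :
    ∑ z : F, (if (z - u) ^ 2 = 4 * c then (1 : ℤ) else 0) = quadraticChar F c + 1 := by
  calc ∑ z : F, (if (z - u) ^ 2 = 4 * c then (1 : ℤ) else 0)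
      = ∑ w : F, (if w ^ 2 = 4 * c then (1 : ℤ) else 0) :=
        (Equiv.subRight u).sum_comp (fun w : F => if w ^ 2 = 4 * c then (1 : ℤ) else 0)
    _ = quadraticChar F c + 1 := by
      rw [sum_ite_sq_eq h2, show (4 : F) * c = 2 ^ 2 * c by norm_num,
        quadraticChar_sq_mul (Ring.two_ne_zero h2)]

end QuadraticCounts

lemma Polynomial.not_squarefree_sq_of_natDegree_pos {R : Type*} [CommRing R] [IsDomain R]
    {p : R[X]} (hp : 0 < p.natDegree) : ¬ Squarefree (p ^ 2) := fun h => by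
  have := h.eq_zero_or_one_of_pow_of_not_isUnit (not_isUnit_of_natDegree_pos p hp)
  omega

section ResolventPencil

variable {F : Type*} [Field F]

lemma not_squarefree_quartic_of_pencil_eq_zero (h2 : ringChar F ≠ 2) {a₀ a₁ a₂ a₃ z : F}
    (hA : -4 * z + (a₃ ^ 2 - 4 * a₂) = 0) (hB : -(2 * a₃ * z + 4 * a₁) = 0)
    (hC : z ^ 2 - 4 * a₀ = 0) :
    ¬ Squarefree (X ^ 4 + C a₃ * X ^ 3 + C a₂ * X ^ 2 + C a₁ * X + C a₀ : F[X]) := by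
  have htwo : (2 : F) ≠ 0 := Ring.two_ne_zero h2
  have hfour := four_ne_zero_of_ringChar_ne_two h2
  obtain ⟨b, rfl⟩ : ∃ b, a₃ = 2 * b := ⟨a₃ / 2, by field_simp⟩
  obtain ⟨t, rfl⟩ : ∃ t, z = -2 * t := ⟨-z / 2, by field_simp⟩
  obtain rfl : a₂ = b ^ 2 + 2 * t := mul_left_cancel₀ hfour (by linear_combination -hA)
  obtain rfl : a₁ = 2 * b * t := mul_left_cancel₀ hfour (by linear_combination -hB)
  obtain rfl : a₀ = t ^ 2 := mul_left_cancel₀ hfour (by linear_combination -hC)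
  rw [show (X ^ 4 + C (2 * b) * X ^ 3 + C (b ^ 2 + 2 * t) * X ^ 2 + C (2 * b * t) * X + C (t ^ 2)
      : F[X]) = (X ^ 2 + C b * X + C t) ^ 2 by
    simp only [map_add, map_mul, map_pow, map_ofNat]; ring]
  have hdeg : (X ^ 2 + C b * X + C t : F[X]).natDegree = 2 := by compute_degree!
  exact not_squarefree_sq_of_natDegree_pos (by omega)

variable [Fintype F] [DecidableEq F]

lemma sum_ite_pencil_eq_quadraticChar_resolvent (h2 : ringChar F ≠ 2) {a₀ a₁ a₂ a₃ : F}
    (hsf : Squarefree (X ^ 4 + C a₃ * X ^ 3 + C a₂ * X ^ 2 + C a₁ * X + C a₀ : F[X])) (z : F) :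
    ∑ x : F, (if (z - (2 * x ^ 2 + a₃ * x)) ^ 2 =
        4 * (x ^ 4 + a₃ * x ^ 3 + a₂ * x ^ 2 + a₁ * x + a₀) then (1 : ℤ) else 0) =
      quadraticChar F (z ^ 3 + a₂ * z ^ 2 + (a₁ * a₃ - 4 * a₀) * z +
          (a₀ * (a₃ ^ 2 - 4 * a₂) + a₁ ^ 2)) + 1 -
        if -4 * z + (a₃ ^ 2 - 4 * a₂) = 0 then 1 else 0 := by
  have hquad (x : F) : (z - (2 * x ^ 2 + a₃ * x)) ^ 2 =
      4 * (x ^ 4 + a₃ * x ^ 3 + a₂ * x ^ 2 + a₁ * x + a₀) ↔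
      (-4 * z + (a₃ ^ 2 - 4 * a₂)) * x ^ 2 + -(2 * a₃ * z + 4 * a₁) * x + (z ^ 2 - 4 * a₀) = 0 := by
    constructor <;> intro h <;> linear_combination h
  have hnondeg : -4 * z + (a₃ ^ 2 - 4 * a₂) ≠ 0 ∨ -(2 * a₃ * z + 4 * a₁) ≠ 0 ∨
      z ^ 2 - 4 * a₀ ≠ 0 := by
    by_contra! h
    exact not_squarefree_quartic_of_pencil_eq_zero h2 h.1 h.2.1 h.2.2 hsf
  simp_rw [hquad]
  rw [sum_ite_quadratic_eq_zero h2 hnondeg]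
  congr 2
  conv_rhs => rw [← quadraticChar_sq_mul (four_ne_zero_of_ringChar_ne_two h2)]
  ring_nf

end ResolventPencil

theorem quartic_to_cubic_descent_general {F : Type*} [Field F] [Fintype F] [DecidableEq F]
    (h2 : ringChar F ≠ 2) (a₀ a₁ a₂ a₃ : F)
    (hsf : Squarefree
      (X ^ 4 + C a₃ * X ^ 3 + C a₂ * X ^ 2 + C a₁ * X + C a₀ : F[X])) :
    ∑ x : F, quadraticChar F (x ^ 4 + a₃ * x ^ 3 + a₂ * x ^ 2 + a₁ * x + a₀) =
      -1 + ∑ x : F, quadraticChar F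
        (x ^ 3 + a₂ * x ^ 2 + (a₁ * a₃ - 4 * a₀) * x +
          (a₀ * (a₃ ^ 2 - 4 * a₂) + a₁ ^ 2)) := by
  have hcount := sum_comm (s := univ) (t := univ) (f := fun x z : F =>
    if (z - (2 * x ^ 2 + a₃ * x)) ^ 2 = 4 * (x ^ 4 + a₃ * x ^ 3 + a₂ * x ^ 2 + a₁ * x + a₀)
      then (1 : ℤ) else 0)
  have hlin := sum_ite_linear_eq_zero (neg_ne_zero.mpr (four_ne_zero_of_ringChar_ne_two h2))
  simp only [sum_ite_sub_sq_eq_four_mul h2, sum_ite_pencil_eq_quadraticChar_resolvent h2 hsf,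
    sum_add_distrib, sum_sub_distrib, hlin] at hcount
  linarith

theorem quartic_to_cubic_descent {F : Type*} [Field F] [Fintype F] [DecidableEq F]
    (h2 : ringChar F ≠ 2) (h3 : ringChar F ≠ 3) (a₀ a₁ a₂ a₃ : F)
    (hsf : Squarefree
      (X ^ 4 + C a₃ * X ^ 3 + C a₂ * X ^ 2 + C a₁ * X + C a₀ : F[X])) :
    ∑ x : F, quadraticChar F (x ^ 4 + a₃ * x ^ 3 + a₂ * x ^ 2 + a₁ * x + a₀) =
      -1 + ∑ x : F, quadraticChar F
        (x ^ 3 + a₂ * x ^ 2 + (a₁ * a₃ - 4 * a₀) * x +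
          (a₀ * (a₃ ^ 2 - 4 * a₂) + a₁ ^ 2)) :=
  quartic_to_cubic_descent_general h2 a₀ a₁ a₂ a₃ hsf
end

section
/- Let a, b, c ∈ F_q with c ≠ 0. Then ∑_{x ∈ F_q} σ(x^4 + (2a - 4b)x^2 - 4cx + a^2) = ∑_{x ∈ F_q} σ(x^4 + (2b - 4a)x^2 - 4cx + b^2). -/
/-!
Counting square roots, `∑ₓ σ(f x) = #{(x, y) | y² = f x} - q`. Since
`f x = (x² + a)² - 4(bx² + cx)`, the substitution `y = x² + a - w` turns the curve into the
family of equations `(2w - 4b)x² - 4cx + (2aw - w²) = 0`, quadratic in `x`, whose discriminant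
is `4(2w³ - 4(a + b)w² + 8abw + 4c²)`, symmetric in `a` and `b`. Counting the roots of each
member by its discriminant gives `∑ₓ σ(f x) = ∑_w σ(2w³ - 4(a + b)w² + 8abw + 4c²) - 1`, the
`- 1` coming from `w = 2b`, where the equation is linear with exactly one root because `c ≠ 0`.
-/

open Finset

namespace QuarticCharSum

variable {F : Type*} [Field F] [Fintype F] [DecidableEq F]

lemma card_filter_sq_eq (hF : ringChar F ≠ 2) (d : F) :
    (#{y : F | y ^ 2 = d} : ℤ) = quadraticChar F d + 1 := by
  rw [← quadraticChar_card_sqrts hF d, Set.toFinset_ofPred]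

lemma sum_quadraticChar_eq_sum_card_sub (hF : ringChar F ≠ 2) (f : F → F) :
    ∑ x, quadraticChar F (f x) = ∑ x, (#{y : F | y ^ 2 = f x} : ℤ) - Fintype.card F := by
  simp [card_filter_sq_eq hF, sum_add_distrib]

lemma card_filter_quadratic_eq_zero (hF : ringChar F ≠ 2) {A : F} (hA : A ≠ 0) (B C : F) :
    (#{x : F | A * x ^ 2 + B * x + C = 0} : ℤ) = quadraticChar F (discrim A B C) + 1 := by
  have h2 : (2 : F) ≠ 0 := Ring.two_ne_zero hF
  rw [← card_filter_sq_eq hF, discrim]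
  congr 1
  refine card_nbij' (fun x => 2 * A * x + B) (fun y => (y - B) / (2 * A)) ?_ ?_ ?_ ?_
  · intro x hx
    simp only [coe_filter, mem_univ, true_and, Set.mem_ofPred_eq] at hx ⊢
    linear_combination 4 * A * hx
  · intro y hy
    simp only [coe_filter, mem_univ, true_and, Set.mem_ofPred_eq] at hy ⊢
    field_simp
    linear_combination hy
  · intro x _
    field_simp
    ring
  · intro y _
    field_simp
    ring

lemma card_filter_quadratic_eq_zero_of_linear_ne_zero (hF : ringChar F ≠ 2) (A : F) {B : F}
    (hB : B ≠ 0) (C : F) :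
    (#{x : F | A * x ^ 2 + B * x + C = 0} : ℤ) =
      quadraticChar F (discrim A B C) + 1 - if A = 0 then 1 else 0 := by
  rcases eq_or_ne A 0 with rfl | hA
  · have hroot : ({x : F | 0 * x ^ 2 + B * x + C = 0} : Finset F) = {-C / B} := by
      ext x
      simp only [mem_filter, mem_univ, true_and, mem_singleton, eq_div_iff hB]
      constructor <;> intro h <;> linear_combination h
    rw [hroot]
    simp [discrim, quadraticChar_sq_one' hB]
  · simp [card_filter_quadratic_eq_zero hF hA, hA]

lemma card_sqrts_quartic_eq (a b c x : F) :
    #{y : F | y ^ 2 = x ^ 4 + (2 * a - 4 * b) * x ^ 2 - 4 * c * x + a ^ 2} =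
      #{w : F | (2 * w - 4 * b) * x ^ 2 + -4 * c * x + (2 * a * w - w ^ 2) = 0} := by
  refine card_nbij' (fun y => x ^ 2 + a - y) (fun w => x ^ 2 + a - w) ?_ ?_ ?_ ?_
  · intro y hy
    simp only [coe_filter, mem_univ, true_and, Set.mem_ofPred_eq] at hy ⊢
    linear_combination -hy
  · intro w hw
    simp only [coe_filter, mem_univ, true_and, Set.mem_ofPred_eq] at hw ⊢
    linear_combination -hw
  · intro y _
    ring
  · intro w _
    ring

lemma card_quadratic_in_x_eq (hF : ringChar F ≠ 2) (a b : F) {c : F} (hc : c ≠ 0) (w : F) :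
    (#{x : F | (2 * w - 4 * b) * x ^ 2 + -4 * c * x + (2 * a * w - w ^ 2) = 0} : ℤ) =
      quadraticChar F (2 * w ^ 3 - 4 * (a + b) * w ^ 2 + 8 * (a * b) * w + 4 * c ^ 2) + 1 -
        if w = 2 * b then 1 else 0 := by
  have h2 : (2 : F) ≠ 0 := Ring.two_ne_zero hF
  have h4c : -4 * c ≠ 0 := by
    rw [show (-4 : F) * c = -(2 * 2 * c) by ring]
    simp [h2, hc]
  have hdiscrim : discrim (2 * w - 4 * b) (-4 * c) (2 * a * w - w ^ 2) =
      2 ^ 2 * (2 * w ^ 3 - 4 * (a + b) * w ^ 2 + 8 * (a * b) * w + 4 * c ^ 2) := by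
    rw [discrim]; ring
  have hlead : 2 * w - 4 * b = 0 ↔ w = 2 * b := by
    rw [show 2 * w - 4 * b = 2 * (w - 2 * b) by ring, mul_eq_zero, sub_eq_zero]
    simp [h2]
  rw [card_filter_quadratic_eq_zero_of_linear_ne_zero hF _ h4c, hdiscrim, map_mul,
    quadraticChar_sq_one' h2, one_mul]
  simp only [hlead]

theorem sum_quadraticChar_quartic_eq (hF : ringChar F ≠ 2) (a b : F) {c : F} (hc : c ≠ 0) :
    ∑ x, quadraticChar F (x ^ 4 + (2 * a - 4 * b) * x ^ 2 - 4 * c * x + a ^ 2) =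
      ∑ w, quadraticChar F (2 * w ^ 3 - 4 * (a + b) * w ^ 2 + 8 * (a * b) * w + 4 * c ^ 2) - 1 := by
  rw [sum_quadraticChar_eq_sum_card_sub hF]
  simp_rw [card_sqrts_quartic_eq]
  rw [← Nat.cast_sum]
  -- `erw`: `bipartiteAbove` agrees with the `filter` in the goal only up to unfolding.
  erw [sum_card_bipartiteAbove_eq_sum_card_bipartiteBelow]
  simp only [Nat.cast_sum, bipartiteBelow, card_quadratic_in_x_eq hF a b hc, sum_sub_distrib,
    sum_add_distrib, sum_ite_eq', mem_univ, if_true, sum_const, card_univ, nsmul_eq_mul, mul_one]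
  ring

end QuarticCharSum

theorem quartic_to_quartic_general {F : Type*} [Field F] [Fintype F] [DecidableEq F]
    (h2 : ringChar F ≠ 2) (a b c : F) (hc : c ≠ 0) :
    ∑ x : F, quadraticChar F (x ^ 4 + (2 * a - 4 * b) * x ^ 2 - 4 * c * x + a ^ 2) =
      ∑ x : F, quadraticChar F (x ^ 4 + (2 * b - 4 * a) * x ^ 2 - 4 * c * x + b ^ 2) := by
  rw [QuarticCharSum.sum_quadraticChar_quartic_eq h2 a b hc,
    QuarticCharSum.sum_quadraticChar_quartic_eq h2 b a hc, add_comm b a, mul_comm b a]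

theorem quartic_to_quartic {F : Type*} [Field F] [Fintype F] [DecidableEq F]
    (h2 : ringChar F ≠ 2) (h3 : ringChar F ≠ 3) (a b c : F) (hc : c ≠ 0) :
    ∑ x : F, quadraticChar F (x ^ 4 + (2 * a - 4 * b) * x ^ 2 - 4 * c * x + a ^ 2) =
      ∑ x : F, quadraticChar F (x ^ 4 + (2 * b - 4 * a) * x ^ 2 - 4 * c * x + b ^ 2) :=
  quartic_to_quartic_general h2 a b c hc
end

section
/- (Master formula.) Let a_1, a_2, a_3, b_1, b_2, b_3, c_1, c_2, c_3 ∈ F_q. Define the row polynomials α(x) = a_1 x^2 + a_2 x + a_3, β(x) = b_1 x^2 + b_2 x + b_3, γ(x) = c_1 x^2 + c_2 x + c_3, and the down polynomials δ_1(u) = a_1 u^2 + b_1 u + c_1, δ_2(u) = a_2 u^2 + b_2 u + c_2, δ_3(u) = a_3 u^2 + b_3 u + c_3. Let n_α = #{x ∈ F_q : α(x) = 0}, n_{α,β,γ} = #{x ∈ F_q : α(x) = β(x) = γ(x) = 0}, n_{δ_1} = #{u ∈ F_q : δ_1(u) = 0}, and n_{δ_1,δ_2,δ_3} = #{u ∈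 F_q : δ_1(u) = δ_2(u) = δ_3(u) = 0}. Then q·n_{α,β,γ} - n_α + ∑_{x ∈ F_q} σ(β(x)^2 - 4α(x)γ(x)) = q·n_{δ_1,δ_2,δ_3} - n_{δ_1} + ∑_{u ∈ F_q} σ(δ_2(u)^2 - 4δ_1(u)δ_3(u)). -/
/-!
Both sides count the zeros of the biquadratic form
`P(x, u) = α(x) u² + β(x) u + γ(x) = δ₁(u) x² + δ₂(u) x + δ₃(u)`, less `q`.
For fixed `x`, a quadratic `A u² + B u + C` has `1 + σ(B² - 4AC)` roots when `A ≠ 0`, and the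
degenerate cases are corrected by the terms `q · [A = B = C = 0]` and `-[A = 0]`; summing over `x`
gives `#{P = 0} - q` for the left side, and summing over `u` instead gives the same for the right.
-/

open Finset

section

variable {F : Type*} [Field F] [Fintype F] [DecidableEq F]

theorem card_quadratic_roots_of_ne_zero (h2 : ringChar F ≠ 2) {A : F} (hA : A ≠ 0) (B C : F) :
    (#{u : F | A * u ^ 2 + B * u + C = 0} : ℤ) = quadraticChar F (discrim A B C) + 1 := by
  have : NeZero (2 : F) := ⟨Ring.two_ne_zero h2⟩
  rw [← quadraticChar_card_sqrts h2, Set.toFinset_ofPred]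
  norm_cast
  refine card_nbij' (fun u => 2 * A * u + B) (fun y => (y - B) / (2 * A)) ?_ ?_ ?_ ?_
  · intro u hu
    simp only [coe_filter, mem_univ, true_and, Set.mem_ofPred_eq] at hu ⊢
    rw [sq u, quadratic_eq_zero_iff_discrim_eq_sq hA] at hu
    exact hu.symm
  · intro y hy
    simp only [coe_filter, mem_univ, true_and, Set.mem_ofPred_eq] at hy ⊢
    rw [sq ((y - B) / (2 * A)), quadratic_eq_zero_iff_discrim_eq_sq hA, ← hy]
    field_simp; ring
  · intro u _
    field_simp; ring
  · intro y _
    field_simp; ring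

theorem card_quadratic_roots (h2 : ringChar F ≠ 2) (A B C : F) :
    (#{u : F | A * u ^ 2 + B * u + C = 0} : ℤ) =
      Fintype.card F * (if A = 0 ∧ B = 0 ∧ C = 0 then 1 else 0) + (if A = 0 then 0 else 1) +
        quadraticChar F (discrim A B C) := by
  by_cases hA : A = 0
  swap
  · rw [card_quadratic_roots_of_ne_zero h2 hA]
    simp [hA, add_comm]
  subst hA
  by_cases hB : B = 0
  · subst hB
    by_cases hC : C = 0 <;> simp [hC, discrim]
  · have hroot : ({u : F | 0 * u ^ 2 + B * u + C = 0} : Finset F) = {-C / B} := by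
      ext u
      simp only [mem_filter, mem_univ, true_and, mem_singleton, zero_mul, zero_add]
      rw [eq_div_iff hB]
      constructor <;> intro h <;> linear_combination h
    rw [hroot, discrim, mul_zero, zero_mul, sub_zero, quadraticChar_sq_one' hB]
    simp [hB]

theorem sum_card_quadratic_roots {ι : Type*} [Fintype ι] (h2 : ringChar F ≠ 2) (α β γ : ι → F) :
    ∑ x, (#{u : F | α x * u ^ 2 + β x * u + γ x = 0} : ℤ) =
      Fintype.card F * #{x | α x = 0 ∧ β x = 0 ∧ γ x = 0} + (Fintype.card ι - #{x | α x = 0}) +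
        ∑ x, quadraticChar F (discrim (α x) (β x) (γ x)) := by
  have hsplit := card_filter_add_card_filter_not (s := univ) fun x => α x = 0
  rw [card_univ] at hsplit
  simp only [card_quadratic_roots h2, sum_add_distrib, ← mul_sum, sum_boole, sum_ite,
    sum_const_zero, zero_add, sum_const, nsmul_eq_mul, mul_one]
  rw [← hsplit]
  push_cast
  ring

end

theorem master_formula_general {F : Type*} [Field F] [Fintype F] [DecidableEq F]
    (h2 : ringChar F ≠ 2)
    (a₁ a₂ a₃ b₁ b₂ b₃ c₁ c₂ c₃ : F)
    (α β γ δ₁ δ₂ δ₃ : F → F)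
    (hα : ∀ x, α x = a₁ * x ^ 2 + a₂ * x + a₃)
    (hβ : ∀ x, β x = b₁ * x ^ 2 + b₂ * x + b₃)
    (hγ : ∀ x, γ x = c₁ * x ^ 2 + c₂ * x + c₃)
    (hδ₁ : ∀ u, δ₁ u = a₁ * u ^ 2 + b₁ * u + c₁)
    (hδ₂ : ∀ u, δ₂ u = a₂ * u ^ 2 + b₂ * u + c₂)
    (hδ₃ : ∀ u, δ₃ u = a₃ * u ^ 2 + b₃ * u + c₃) :
    (Fintype.card F : ℤ) *
        ((univ.filter fun x : F => α x = 0 ∧ β x = 0 ∧ γ x = 0).card : ℤ) -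
        ((univ.filter fun x : F => α x = 0).card : ℤ) +
        ∑ x : F, quadraticChar F (β x ^ 2 - 4 * α x * γ x) =
      (Fintype.card F : ℤ) *
        ((univ.filter fun u : F => δ₁ u = 0 ∧ δ₂ u = 0 ∧ δ₃ u = 0).card : ℤ) -
        ((univ.filter fun u : F => δ₁ u = 0).card : ℤ) +
        ∑ u : F, quadraticChar F (δ₂ u ^ 2 - 4 * δ₁ u * δ₃ u) := by
  have hrows := sum_card_quadratic_roots h2 α β γ
  have hcols := sum_card_quadratic_roots h2 δ₁ δ₂ δ₃
  have hswap : ∑ x, (#{u : F | α x * u ^ 2 + β x * u + γ x = 0} : ℤ) =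
      ∑ u, (#{x : F | δ₁ u * x ^ 2 + δ₂ u * x + δ₃ u = 0} : ℤ) := by
    have hsame : ∀ x u, α x * u ^ 2 + β x * u + γ x = δ₁ u * x ^ 2 + δ₂ u * x + δ₃ u := by
      intro x u; rw [hα, hβ, hγ, hδ₁, hδ₂, hδ₃]; ring
    simp only [hsame]
    exact_mod_cast sum_card_bipartiteAbove_eq_sum_card_bipartiteBelow _
  simp only [discrim] at hrows hcols
  linarith

theorem master_formula {F : Type*} [Field F] [Fintype F] [DecidableEq F]
    (h2 : ringChar F ≠ 2) (h3 : ringChar F ≠ 3)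
    (a₁ a₂ a₃ b₁ b₂ b₃ c₁ c₂ c₃ : F)
    (α β γ δ₁ δ₂ δ₃ : F → F)
    (hα : ∀ x, α x = a₁ * x ^ 2 + a₂ * x + a₃)
    (hβ : ∀ x, β x = b₁ * x ^ 2 + b₂ * x + b₃)
    (hγ : ∀ x, γ x = c₁ * x ^ 2 + c₂ * x + c₃)
    (hδ₁ : ∀ u, δ₁ u = a₁ * u ^ 2 + b₁ * u + c₁)
    (hδ₂ : ∀ u, δ₂ u = a₂ * u ^ 2 + b₂ * u + c₂)
    (hδ₃ : ∀ u, δ₃ u = a₃ * u ^ 2 + b₃ * u + c₃) :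
    (Fintype.card F : ℤ) *
        ((univ.filter fun x : F => α x = 0 ∧ β x = 0 ∧ γ x = 0).card : ℤ) -
        ((univ.filter fun x : F => α x = 0).card : ℤ) +
        ∑ x : F, quadraticChar F (β x ^ 2 - 4 * α x * γ x) =
      (Fintype.card F : ℤ) *
        ((univ.filter fun u : F => δ₁ u = 0 ∧ δ₂ u = 0 ∧ δ₃ u = 0).card : ℤ) -
        ((univ.filter fun u : F => δ₁ u = 0).card : ℤ) +
        ∑ u : F, quadraticChar F (δ₂ u ^ 2 - 4 * δ₁ u * δ₃ u) :=
  master_formula_general h2 a₁ a₂ a₃ b₁ b₂ b₃ c₁ c₂ c₃ α β γ δ₁ δ₂ δ₃ hα hβ hγ hδ₁ hδ₂ hδ₃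
end

section
/- Let b, c ∈ F_q with b^2 ≠ 4c. Then ∑_{x ∈ F_q} σ(x^4 + b x^2 + c) = -1 + ∑_{x ∈ F_q} σ(x^3 + b x^2 + c x). -/
/-!
Since `x ↦ x ^ 2` hits each `y` exactly `1 + σ(y)` times, `∑ₓ g(x²) = ∑_y (1 + σ(y)) g(y)`.
With `g(y) = σ(y² + by + c)` the `σ(y)`-part is the cubic sum, and what remains is the sum of `σ`
over a quadratic with nonzero discriminant. Completing the square and substituting `y = x²` again
reduces it to `∑_y σ(y(y - d))`, which the rescaling `y = dx` turns into `σ(-1)` times the Jacobi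
sum `J(σ, σ) = -σ(-1)`; hence it equals `-1`.
-/

open Finset

section

variable {F : Type*} [Field F] [Fintype F] [DecidableEq F]

theorem sum_comp_sq {M : Type*} [AddCommGroup M] (hF : ringChar F ≠ 2) (g : F → M) :
    ∑ x : F, g (x ^ 2) = ∑ y : F, (quadraticChar F y + 1) • g y := by
  rw [← sum_fiberwise_of_maps_to (g := (· ^ 2)) (fun x _ => mem_univ (x ^ 2))]
  refine sum_congr rfl fun y _ => ?_
  have hcard := quadraticChar_card_sqrts hF y
  rw [Set.toFinset_ofPred] at hcard
  rw [sum_congr rfl fun x hx => congrArg g (mem_filter.mp hx).2, sum_const, ← hcard,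
    natCast_zsmul]

theorem sum_quadraticChar_mul_sub_self (hF : ringChar F ≠ 2) {d : F} (hd : d ≠ 0) :
    ∑ y : F, quadraticChar F (y * (y - d)) = -1 := by
  have hJ := jacobiSum_nontrivial_inv (quadraticChar_ne_one hF)
  rw [(quadraticChar_isQuadratic F).inv, jacobiSum] at hJ
  have hscale (x : F) : quadraticChar F (d * x * (d * x - d))
      = quadraticChar F (-1) * (quadraticChar F x * quadraticChar F (1 - x)) := by
    rw [show d * x * (d * x - d) = d ^ 2 * (-1 * (x * (1 - x))) by ring, map_mul,
      quadraticChar_sq_one' hd, one_mul, map_mul, map_mul]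
  rw [← Equiv.sum_comp (Equiv.mulLeft₀ d hd)]
  simp only [Equiv.mulLeft₀_apply, hscale, ← mul_sum, hJ, mul_neg, ← sq,
    quadraticChar_sq_one (neg_ne_zero.mpr (one_ne_zero (α := F)))]

theorem sum_quadraticChar_sq_sub (hF : ringChar F ≠ 2) {d : F} (hd : d ≠ 0) :
    ∑ x : F, quadraticChar F (x ^ 2 - d) = -1 := by
  rw [sum_comp_sq hF fun y => quadraticChar F (y - d)]
  simp only [smul_eq_mul, add_mul, one_mul, ← map_mul, sum_add_distrib,
    sum_quadraticChar_mul_sub_self hF hd]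
  rw [Fintype.sum_equiv (Equiv.subRight d) (fun x => quadraticChar F (x - d)) _ fun _ => rfl,
    quadraticChar_sum_zero hF, add_zero]

theorem sum_quadraticChar_quadratic (hF : ringChar F ≠ 2) {b c : F} (hbc : b ^ 2 ≠ 4 * c) :
    ∑ x : F, quadraticChar F (x ^ 2 + b * x + c) = -1 := by
  have h2 : (2 : F) ≠ 0 := Ring.two_ne_zero hF
  have hdisc : (b ^ 2 - 4 * c) / 2 ^ 2 ≠ 0 :=
    div_ne_zero (sub_ne_zero.mpr hbc) (pow_ne_zero 2 h2)
  rw [← Equiv.sum_comp (Equiv.subRight (b / 2)), ← sum_quadraticChar_sq_sub hF hdisc]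
  refine sum_congr rfl fun x _ => congrArg _ ?_
  simp only [Equiv.subRight_apply]
  field_simp
  ring

end

theorem biquadratic_descent_general {F : Type*} [Field F] [Fintype F] [DecidableEq F]
    (h2 : ringChar F ≠ 2) (b c : F) (hbc : b ^ 2 ≠ 4 * c) :
    ∑ x : F, quadraticChar F (x ^ 4 + b * x ^ 2 + c) =
      -1 + ∑ x : F, quadraticChar F (x ^ 3 + b * x ^ 2 + c * x) := by
  calc ∑ x : F, quadraticChar F (x ^ 4 + b * x ^ 2 + c)
      = ∑ x : F, quadraticChar F ((x ^ 2) ^ 2 + b * x ^ 2 + c) :=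
        sum_congr rfl fun x _ => by ring_nf
    _ = ∑ y : F, (quadraticChar F y + 1) • quadraticChar F (y ^ 2 + b * y + c) :=
        sum_comp_sq h2 fun y => quadraticChar F (y ^ 2 + b * y + c)
    _ = ∑ y : F, quadraticChar F (y ^ 3 + b * y ^ 2 + c * y)
          + ∑ y : F, quadraticChar F (y ^ 2 + b * y + c) := by
        rw [← sum_add_distrib]
        refine sum_congr rfl fun y _ => ?_
        rw [smul_eq_mul, add_mul, one_mul, ← map_mul]
        congr 2
        ring
    _ = -1 + ∑ x : F, quadraticChar F (x ^ 3 + b * x ^ 2 + c * x) := by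
        rw [sum_quadraticChar_quadratic h2 hbc, add_comm]

theorem biquadratic_descent {F : Type*} [Field F] [Fintype F] [DecidableEq F]
    (h2 : ringChar F ≠ 2) (h3 : ringChar F ≠ 3) (b c : F) (hbc : b ^ 2 ≠ 4 * c) :
    ∑ x : F, quadraticChar F (x ^ 4 + b * x ^ 2 + c) =
      -1 + ∑ x : F, quadraticChar F (x ^ 3 + b * x ^ 2 + c * x) :=
  biquadratic_descent_general h2 b c hbc
end

section
/- Let a, b, c ∈ F_q with (a, c) ≠ (0, 0) and (b, c) ≠ (0, 0). Then ∑_{x ∈ F_q} σ((x^2 + a)^2 - 4x(bx + c)) = ∑_{x ∈ F_q} σ((x^2 + b)^2 - 4x(ax + c)). -/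
/-!
Count the points of the curve `u² - (x² + a) u + b x² + c x = 0` in two ways. As a quadratic in
`u`, its fibre over `x` has `1 + σ((x² + a)² - 4x(bx + c))` points. Rewritten as
`(b - u) x² + c x + u (u - a) = 0`, it is a quadratic in `x` for `u ≠ b`, with
`1 + σ(c² + 4u(u - a)(u - b))` points over `u`, while over `u = b` it is linear with `σ(c²)`
points. Hence the left-hand sum is `∑ᵤ σ(c² + 4u(u - a)(u - b)) - 1`, which is symmetric
in `a` and `b`.
-/

open Finset

section

variable {F : Type*} [Field F] [Fintype F] [DecidableEq F]

theorem card_filter_quadratic_eq_zero (hF : ringChar F ≠ 2) {A : F} (hA : A ≠ 0) (B C : F) :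
    (#{x | A * x ^ 2 + B * x + C = 0} : ℤ) = quadraticChar F (B ^ 2 - 4 * A * C) + 1 := by
  have h2 : (2 : F) ≠ 0 := Ring.two_ne_zero hF
  rw [← quadraticChar_card_sqrts hF, Set.toFinset_ofPred]
  congr 1
  -- completing the square: `A x² + B x + C = 0 ↔ (2 A x + B)² = B² - 4 A C`
  refine card_nbij' (fun x ↦ 2 * A * x + B) (fun y ↦ (y - B) / (2 * A)) ?_ ?_ ?_ ?_ <;>
    intro x hx <;> simp only [coe_filter, mem_univ, true_and, Set.mem_ofPred_eq] at hx ⊢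
  · linear_combination 4 * A * hx
  · field_simp
    linear_combination hx
  · field_simp
    ring
  · field_simp
    ring

theorem card_filter_linear_eq_zero {c d : F} (hcd : (c, d) ≠ (0, 0)) :
    (#{x | c * x + d = 0} : ℤ) = quadraticChar F (c ^ 2) := by
  by_cases hc : c = 0
  · have hd : d ≠ 0 := by rintro rfl; exact hcd (by rw [hc])
    simp [hc, hd]
  · have : ({x | c * x + d = 0} : Finset F) = {-d / c} := by
      ext x
      simp only [mem_filter, mem_univ, true_and, mem_singleton]
      rw [eq_div_iff hc]
      constructor <;> intro h <;> linear_combination h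
    simp [this, quadraticChar_sq_one' hc]

theorem card_quarticCurve_fiber_x (hF : ringChar F ≠ 2) (a b c x : F) :
    (#{u | u ^ 2 - (x ^ 2 + a) * u + (b * x ^ 2 + c * x) = 0} : ℤ) =
      quadraticChar F ((x ^ 2 + a) ^ 2 - 4 * x * (b * x + c)) + 1 := by
  have := card_filter_quadratic_eq_zero hF one_ne_zero (-(x ^ 2 + a)) (b * x ^ 2 + c * x)
  simp only [one_mul, neg_mul, ← sub_eq_add_neg] at this
  rw [this]
  ring_nf

theorem card_quarticCurve_fiber_u (hF : ringChar F ≠ 2) {a b c : F} (hbc : (b, c) ≠ (0, 0))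
    (hab : a ≠ b) (u : F) :
    (#{x | u ^ 2 - (x ^ 2 + a) * u + (b * x ^ 2 + c * x) = 0} : ℤ) =
      quadraticChar F (c ^ 2 + 4 * u * (u - a) * (u - b)) + 1 - if u = b then 1 else 0 := by
  have hfilter : #{x | u ^ 2 - (x ^ 2 + a) * u + (b * x ^ 2 + c * x) = 0} =
      #{x | (b - u) * x ^ 2 + c * x + (u ^ 2 - a * u) = 0} := congrArg card <|
    filter_congr fun x _ ↦ by constructor <;> intro h <;> linear_combination h
  rw [hfilter]
  split_ifs with hu
  · subst hu
    have hcd : (c, u ^ 2 - a * u) ≠ (0, 0) := by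
      intro h
      simp only [Prod.mk.injEq] at h
      have : u * (u - a) = 0 := by linear_combination h.2
      rcases mul_eq_zero.mp this with hu | hu
      · exact hbc (by rw [hu, h.1])
      · exact hab (sub_eq_zero.mp hu).symm
    simp only [sub_self, zero_mul, zero_add, mul_zero, add_zero, add_sub_cancel_right]
    exact card_filter_linear_eq_zero hcd
  · rw [card_filter_quadratic_eq_zero hF (sub_ne_zero.mpr (Ne.symm hu))]
    ring_nf

theorem sum_quadraticChar_quartic (hF : ringChar F ≠ 2) {a b c : F} (hbc : (b, c) ≠ (0, 0))
    (hab : a ≠ b) :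
    ∑ x : F, quadraticChar F ((x ^ 2 + a) ^ 2 - 4 * x * (b * x + c)) =
      ∑ u : F, quadraticChar F (c ^ 2 + 4 * u * (u - a) * (u - b)) - 1 := by
  have hcount := sum_card_bipartiteAbove_eq_sum_card_bipartiteBelow (s := univ) (t := univ)
    (r := fun x u : F ↦ u ^ 2 - (x ^ 2 + a) * u + (b * x ^ 2 + c * x) = 0)
  simp only [bipartiteAbove, bipartiteBelow] at hcount
  have hcount' := congrArg (Nat.cast : ℕ → ℤ) hcount
  push_cast at hcount'
  simp only [card_quarticCurve_fiber_x hF, card_quarticCurve_fiber_u hF hbc hab,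
    sum_add_distrib, sum_sub_distrib, sum_ite_eq', mem_univ, if_true, sum_const, card_univ,
    nsmul_eq_mul, mul_one] at hcount'
  linarith

end

theorem symmetric_quartic_formula_general {F : Type*} [Field F] [Fintype F] [DecidableEq F]
    (h2 : ringChar F ≠ 2) (a b c : F)
    (hac : (a, c) ≠ (0, 0)) (hbc : (b, c) ≠ (0, 0)) :
    ∑ x : F, quadraticChar F ((x ^ 2 + a) ^ 2 - 4 * x * (b * x + c)) =
      ∑ x : F, quadraticChar F ((x ^ 2 + b) ^ 2 - 4 * x * (a * x + c)) := by
  rcases eq_or_ne a b with rfl | hab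
  · rfl
  rw [sum_quadraticChar_quartic h2 hbc hab, sum_quadraticChar_quartic h2 hac hab.symm]
  congr 1
  exact sum_congr rfl fun u _ ↦ by ring_nf

theorem symmetric_quartic_formula {F : Type*} [Field F] [Fintype F] [DecidableEq F]
    (h2 : ringChar F ≠ 2) (h3 : ringChar F ≠ 3) (a b c : F)
    (hac : (a, c) ≠ (0, 0)) (hbc : (b, c) ≠ (0, 0)) :
    ∑ x : F, quadraticChar F ((x ^ 2 + a) ^ 2 - 4 * x * (b * x + c)) =
      ∑ x : F, quadraticChar F ((x ^ 2 + b) ^ 2 - 4 * x * (a * x + c)) :=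
  symmetric_quartic_formula_general h2 a b c hac hbc
end

section
/- Let a, b ∈ F_q with a ≠ 0 and b ≠ 0. Then ∑_{x ∈ F_q} σ(x)·σ((x + a)^2 - 4bx) = ∑_{x ∈ F_q} σ(x)·σ((x + b)^2 - 4ax). -/
/-!
Counting the roots `t` of `t² - (x + a) t + b x` by the discriminant turns the left-hand side into
`∑ₓ ∑_{t root} σ(x)`. Swapping the sums, the condition becomes linear in `x`, namely
`x (t - b) = t (t - a)`, and summing `σ` over its solutions gives `σ(t (t - a) (t - b))`.
Hence both sides equal `∑ₜ σ(t (t - a) (t - b))`, which is symmetric in `a` and `b`.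
-/

open Finset

section

variable {F : Type*} [Field F] [Fintype F] [DecidableEq F]

theorem card_roots_monic_quadratic (hF : ringChar F ≠ 2) (p q : F) :
    (#{t : F | t ^ 2 + p * t + q = 0} : ℤ) = quadraticChar F (p ^ 2 - 4 * q) + 1 := by
  have h2 : (2 : F) ≠ 0 := Ring.two_ne_zero hF
  rw [← quadraticChar_card_sqrts hF, Set.toFinset_ofPred]
  congr 1
  refine card_nbij' (fun t => 2 * t + p) (fun y => (y - p) / 2) ?_ ?_ ?_ ?_
  · intro t ht
    simp only [coe_filter, mem_univ, true_and, Set.mem_ofPred_eq] at ht ⊢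
    linear_combination 4 * ht
  · intro y hy
    simp only [coe_filter, mem_univ, true_and, Set.mem_ofPred_eq] at hy ⊢
    field_simp
    linear_combination hy
  · intro t _
    field_simp
    ring
  · intro y _
    field_simp
    ring

theorem sum_quadraticChar_filter_mul_eq (hF : ringChar F ≠ 2) (u v : F) :
    ∑ x with x * u = v, quadraticChar F x = quadraticChar F (u * v) := by
  by_cases hu : u = 0
  · subst hu
    by_cases hv : v = 0
    · simp only [hv, mul_zero, filter_true, quadraticChar_zero]
      exact quadraticChar_sum_zero hF
    · simp [Ne.symm hv]
  · have hsol : ∀ x, x * u = v ↔ x = v / u := fun x => (eq_div_iff hu).symm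
    have hsq : v / u * u ^ 2 = u * v := by field_simp
    simp only [hsol, filter_eq', mem_univ, if_true, sum_singleton]
    rw [← hsq, map_mul, quadraticChar_sq_one' hu, mul_one]

theorem sum_quadraticChar_mul_discrim (hF : ringChar F ≠ 2) (a b : F) :
    ∑ x : F, quadraticChar F x * quadraticChar F ((x + a) ^ 2 - 4 * b * x) =
      ∑ t : F, quadraticChar F ((t - b) * (t * (t - a))) := by
  have hroots : ∀ x : F, (quadraticChar F ((x + a) ^ 2 - 4 * b * x) : ℤ) =
      #{t : F | t ^ 2 + -(x + a) * t + b * x = 0} - 1 := by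
    intro x
    rw [card_roots_monic_quadratic hF]
    ring_nf
  calc ∑ x : F, quadraticChar F x * quadraticChar F ((x + a) ^ 2 - 4 * b * x)
      = ∑ x : F, ∑ t with t ^ 2 + -(x + a) * t + b * x = 0, quadraticChar F x -
          ∑ x : F, quadraticChar F x := by
        rw [← sum_sub_distrib]
        refine sum_congr rfl fun x _ => ?_
        rw [hroots, sum_const, nsmul_eq_mul]
        ring
    _ = ∑ t : F, ∑ x with x * (t - b) = t * (t - a), quadraticChar F x := by
        rw [quadraticChar_sum_zero hF, sub_zero]
        simp only [sum_filter]
        rw [sum_comm]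
        refine sum_congr rfl fun t _ => sum_congr rfl fun x _ => if_congr ?_ rfl rfl
        constructor <;> intro h <;> linear_combination -h
    _ = ∑ t : F, quadraticChar F ((t - b) * (t * (t - a))) :=
        sum_congr rfl fun t _ => sum_quadraticChar_filter_mul_eq hF _ _

end

theorem cubic_to_cubic_general {F : Type*} [Field F] [Fintype F] [DecidableEq F]
    (h2 : ringChar F ≠ 2) (a b : F) :
    ∑ x : F, quadraticChar F x * quadraticChar F ((x + a) ^ 2 - 4 * b * x) =
      ∑ x : F, quadraticChar F x * quadraticChar F ((x + b) ^ 2 - 4 * a * x) := by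
  rw [sum_quadraticChar_mul_discrim h2 a b, sum_quadraticChar_mul_discrim h2 b a]
  exact sum_congr rfl fun t _ => congrArg _ (by ring)

theorem cubic_to_cubic {F : Type*} [Field F] [Fintype F] [DecidableEq F]
    (h2 : ringChar F ≠ 2) (h3 : ringChar F ≠ 3) (a b : F) (ha : a ≠ 0) (hb : b ≠ 0) :
    ∑ x : F, quadraticChar F x * quadraticChar F ((x + a) ^ 2 - 4 * b * x) =
      ∑ x : F, quadraticChar F x * quadraticChar F ((x + b) ^ 2 - 4 * a * x) :=
  cubic_to_cubic_general h2 a b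
end

section
/- Let f(x) = x^4 + a x^2 + b x + c be a square-free depressed quartic over F_q. Then ∑_{x ∈ F_q} σ(f(x)) = -1 + ∑_{x ∈ F_q} σ(x^3 + a x^2 - 4c x + b^2 - 4ac). -/
/-!
Since `σ(t) + 1` counts the square roots of `t`, the left side is `#{(x, y) | y² = f(x)} - q`.
Substituting `y = x² + u` turns `y² = f(x)` into the quadratic `(2u - a)x² - bx + (u² - c) = 0`
in `x`; for each fixed `u` it has `σ(b² - 4(2u - a)(u² - c)) + 1` roots, except that the `+ 1` is
lost at the single value `u = a/2`, where the equation becomes linear (square-freeness of `f`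
excludes it becoming `0 = 0`). Finally `u = -x/2` turns that discriminant into the resolvent cubic.
-/

open Polynomial Finset

section QuadraticCount

variable {F : Type*} [Field F] [Fintype F] [DecidableEq F]

theorem card_filter_sq_eq (hF : ringChar F ≠ 2) (t : F) :
    (#{y : F | y ^ 2 = t} : ℤ) = quadraticChar F t + 1 := by
  rw [← quadraticChar_card_sqrts hF t, Set.toFinset_ofPred]

theorem card_filter_quadratic_eq_zero_of_ne_zero (hF : ringChar F ≠ 2) {α : F} (hα : α ≠ 0)
    (β γ : F) :
    (#{x : F | α * (x * x) + β * x + γ = 0} : ℤ) = quadraticChar F (discrim α β γ) + 1 := by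
  have : NeZero (2 : F) := ⟨Ring.two_ne_zero hF⟩
  rw [← card_filter_sq_eq hF, card_equiv
    ((Equiv.mulLeft₀ (2 * α) (mul_ne_zero two_ne_zero hα)).trans (Equiv.addRight β))]
  simp [quadratic_eq_zero_iff_discrim_eq_sq hα, eq_comm]

theorem card_filter_quadratic_eq_zero_s10 (hF : ringChar F ≠ 2) {α β γ : F}
    (h : α ≠ 0 ∨ β ≠ 0 ∨ γ ≠ 0) :
    (#{x : F | α * (x * x) + β * x + γ = 0} : ℤ) =
      quadraticChar F (discrim α β γ) + if α = 0 then 0 else 1 := by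
  rcases eq_or_ne α 0 with rfl | hα
  · rcases eq_or_ne β 0 with rfl | hβ
    · have hγ : γ ≠ 0 := by simpa using h
      simp [hγ, discrim]
    · have : ({x : F | 0 * (x * x) + β * x + γ = 0} : Finset F) = {-γ / β} := by
        ext x
        simp only [mem_filter_univ, mem_singleton, zero_mul, zero_add, eq_div_iff hβ]
        constructor <;> intro h <;> linear_combination h
      rw [this]
      simp [discrim, quadraticChar_sq_one' hβ]
  · simp [card_filter_quadratic_eq_zero_of_ne_zero hF hα, hα]

end QuadraticCount

theorem depressed_quartic_ne_sq_of_squarefree {F : Type*} [Field F] {a b c : F}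
    (hsf : Squarefree (X ^ 4 + C a * X ^ 2 + C b * X + C c : F[X])) (u : F) :
    2 * u - a ≠ 0 ∨ -b ≠ 0 ∨ u ^ 2 - c ≠ 0 := by
  by_contra! h
  obtain ⟨ha, hb, hc⟩ := h
  obtain rfl : a = 2 * u := by linear_combination -ha
  obtain rfl : b = 0 := by linear_combination -hb
  obtain rfl : c = u ^ 2 := by linear_combination -hc
  have hsq : (X ^ 4 + C (2 * u) * X ^ 2 + C 0 * X + C (u ^ 2) : F[X]) =
      (X ^ 2 + C u) * (X ^ 2 + C u) := by
    simp only [map_mul, map_pow, C_ofNat, map_zero]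
    ring
  have := natDegree_eq_zero_of_isUnit (hsf _ hsq.symm.dvd)
  rw [natDegree_X_pow_add_C] at this
  exact two_ne_zero this

section DepressedQuartic

variable {F : Type*} [Field F] [Fintype F] [DecidableEq F]

theorem card_filter_sq_eq_depressed_quartic (a b c x : F) :
    #{y : F | y ^ 2 = x ^ 4 + a * x ^ 2 + b * x + c} =
      #{u : F | (2 * u - a) * (x * x) + -b * x + (u ^ 2 - c) = 0} := by
  refine (card_equiv (Equiv.addLeft (x ^ 2)) fun u => ?_).symm
  simp only [mem_filter_univ, Equiv.coe_addLeft]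
  constructor <;> intro h <;> linear_combination h

theorem sum_ite_mul_sub_eq_zero {α : F} (hα : α ≠ 0) (a : F) :
    ∑ u : F, (if α * u - a = 0 then 0 else 1 : ℤ) = Fintype.card F - 1 := by
  calc _ = ∑ v : F, (if v = 0 then 0 else 1 : ℤ) :=
        Equiv.sum_comp ((Equiv.mulLeft₀ α hα).trans (Equiv.subRight a)) _
    _ = _ := by simp [Finset.sum_ite, filter_ne', Nat.cast_pred Fintype.card_pos]

theorem sum_quadraticChar_resolvent (h2 : (2 : F) ≠ 0) (a b c : F) :
    ∑ u : F, quadraticChar F (discrim (2 * u - a) (-b) (u ^ 2 - c)) =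
      ∑ x : F, quadraticChar F (x ^ 3 + a * x ^ 2 - 4 * c * x + (b ^ 2 - 4 * a * c)) := by
  refine (Equiv.sum_comp (Equiv.mulLeft₀ (-2⁻¹) (by simpa using h2)) _).symm.trans ?_
  congr! 2 with x
  simp only [Equiv.mulLeft₀_apply, discrim]
  field_simp
  ring

end DepressedQuartic

theorem depressed_quartic_descent_general {F : Type*} [Field F] [Fintype F] [DecidableEq F]
    (h2 : ringChar F ≠ 2) (a b c : F)
    (hsf : Squarefree (X ^ 4 + C a * X ^ 2 + C b * X + C c : F[X])) :
    ∑ x : F, quadraticChar F (x ^ 4 + a * x ^ 2 + b * x + c) =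
      -1 + ∑ x : F, quadraticChar F
        (x ^ 3 + a * x ^ 2 - 4 * c * x + (b ^ 2 - 4 * a * c)) := by
  have h2' : (2 : F) ≠ 0 := Ring.two_ne_zero h2
  calc _ = ∑ x : F,
          ((#{u : F | (2 * u - a) * (x * x) + -b * x + (u ^ 2 - c) = 0} : ℤ) - 1) := by
        simp only [← card_filter_sq_eq_depressed_quartic, card_filter_sq_eq h2,
          add_sub_cancel_right]
    _ = ∑ u : F, (#{x : F | (2 * u - a) * (x * x) + -b * x + (u ^ 2 - c) = 0} : ℤ) -
          Fintype.card F := by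
        have := sum_card_bipartiteAbove_eq_sum_card_bipartiteBelow (s := (univ : Finset F))
          (t := univ) (r := fun x u => (2 * u - a) * (x * x) + -b * x + (u ^ 2 - c) = 0)
        simp only [bipartiteAbove, bipartiteBelow] at this
        rw [sum_sub_distrib, ← Nat.cast_sum, this]
        simp
    _ = ∑ u : F, (quadraticChar F (discrim (2 * u - a) (-b) (u ^ 2 - c)) +
          if 2 * u - a = 0 then 0 else 1) - Fintype.card F := by
        simp only [card_filter_quadratic_eq_zero_s10 h2 (depressed_quartic_ne_sq_of_squarefree hsf _)]
    _ = _ := by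
        rw [sum_add_distrib, sum_ite_mul_sub_eq_zero h2', sum_quadraticChar_resolvent h2']
        ring

theorem depressed_quartic_descent {F : Type*} [Field F] [Fintype F] [DecidableEq F]
    (h2 : ringChar F ≠ 2) (h3 : ringChar F ≠ 3) (a b c : F)
    (hsf : Squarefree (X ^ 4 + C a * X ^ 2 + C b * X + C c : F[X])) :
    ∑ x : F, quadraticChar F (x ^ 4 + a * x ^ 2 + b * x + c) =
      -1 + ∑ x : F, quadraticChar F
        (x ^ 3 + a * x ^ 2 - 4 * c * x + (b ^ 2 - 4 * a * c)) :=
  depressed_quartic_descent_general h2 a b c hsf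
end

section
/- Let b_1, c_1, b_2, c_2 ∈ F_q and set Δ_1 = b_1^2 - 4c_1, Δ_2 = b_2^2 - 4c_2, and B = 4(c_1 + c_2) - 2 b_1 b_2. The quartic polynomial f(x) = (x^2 + b_1 x + c_1)(x^2 + b_2 x + c_2) is square-free if and only if Δ_1 ≠ 0, Δ_2 ≠ 0, and B^2 ≠ 4 Δ_1 Δ_2. -/
open Polynomial

/-!
Over a perfect field a product `f₁ f₂` is square-free exactly when `f₁` and `f₂` are separable
and coprime, i.e. when the discriminants `Δ₁, Δ₂` and the resultant `Res(f₁, f₂)` are nonzero.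
For monic quadratics `B² - 4 Δ₁ Δ₂ = 16 Res(f₁, f₂)`, and `16 ≠ 0` away from characteristic 2.
-/

namespace Polynomial

section Field

variable {K : Type*} [Field K]

theorem isCoprime_iff_resultant_ne_zero {f g : K[X]} (hf : f ≠ 0) :
    IsCoprime f g ↔ resultant f g ≠ 0 := by
  simp [resultant_eq_zero_iff, hf]

theorem natDegree_derivative_of_natDegree_cast_ne_zero {f : K[X]}
    (hf : (f.natDegree : K) ≠ 0) : (derivative f).natDegree = f.natDegree - 1 := by
  have hn : 0 < f.natDegree := Nat.pos_of_ne_zero (by rintro h; simp [h] at hf)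
  refine (natDegree_derivative_le f).antisymm (le_natDegree_of_ne_zero ?_)
  rw [coeff_derivative, ← Nat.cast_add_one, Nat.sub_add_cancel hn]
  exact mul_ne_zero (leadingCoeff_ne_zero.mpr (ne_zero_of_natDegree_gt hn)) hf

theorem squarefree_iff_discr_ne_zero [PerfectField K] {f : K[X]} (hf : (f.natDegree : K) ≠ 0) :
    Squarefree f ↔ f.discr ≠ 0 := by
  have hn : f.natDegree ≠ 0 := by rintro h; simp [h] at hf
  have hf0 : f ≠ 0 := by rintro rfl; simp at hn
  rw [← PerfectField.separable_iff_squarefree, separable_def, isCoprime_iff_resultant_ne_zero hf0,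
    natDegree_derivative_of_natDegree_cast_ne_zero hf,
    resultant_deriv (natDegree_pos_iff_degree_pos.mp (Nat.pos_of_ne_zero hn))]
  simp [hf0]

end Field

section Quadratic

variable {R : Type*} [CommRing R] (b c b₁ c₁ b₂ c₂ : R)

theorem natDegree_X_sq_add_C_mul_X_add_C [Nontrivial R] :
    (X ^ 2 + C b * X + C c).natDegree = 2 := by
  compute_degree!

theorem discr_X_sq_add_C_mul_X_add_C [Nontrivial R] :
    (X ^ 2 + C b * X + C c).discr = b ^ 2 - 4 * c := by
  rw [discr_of_degree_eq_two (by compute_degree!)]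
  simp

theorem resultant_X_sq_add_C_mul_X_add_C :
    resultant (X ^ 2 + C b₁ * X + C c₁) (X ^ 2 + C b₂ * X + C c₂) 2 2 =
      (c₁ - c₂) ^ 2 + (b₁ - b₂) * (b₁ * c₂ - b₂ * c₁) := by
  simp [resultant, sylvester, Fin.addCases, Matrix.det_succ_row_zero, Fin.sum_univ_succ,
    Fin.succAbove, coeff_X, coeff_C]
  ring

end Quadratic

end Polynomial

theorem squarefree_iff_discriminant_conditions_general {F : Type*} [Field F] [Fintype F]
    (h2 : ringChar F ≠ 2) (b₁ c₁ b₂ c₂ : F) :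
    Squarefree ((X ^ 2 + C b₁ * X + C c₁) * (X ^ 2 + C b₂ * X + C c₂) : F[X]) ↔
      b₁ ^ 2 - 4 * c₁ ≠ 0 ∧ b₂ ^ 2 - 4 * c₂ ≠ 0 ∧
        (4 * (c₁ + c₂) - 2 * b₁ * b₂) ^ 2 ≠
          4 * ((b₁ ^ 2 - 4 * c₁) * (b₂ ^ 2 - 4 * c₂)) := by
  have h2' : (2 : F) ≠ 0 := Ring.two_ne_zero h2
  have hdeg (b c : F) : ((X ^ 2 + C b * X + C c).natDegree : F) ≠ 0 := by
    rw [natDegree_X_sq_add_C_mul_X_add_C]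
    exact_mod_cast h2'
  have hres : (4 * (c₁ + c₂) - 2 * b₁ * b₂) ^ 2 - 4 * ((b₁ ^ 2 - 4 * c₁) * (b₂ ^ 2 - 4 * c₂)) =
      2 ^ 4 * ((c₁ - c₂) ^ 2 + (b₁ - b₂) * (b₁ * c₂ - b₂ * c₁)) := by
    ring
  have hB : (4 * (c₁ + c₂) - 2 * b₁ * b₂) ^ 2 ≠ 4 * ((b₁ ^ 2 - 4 * c₁) * (b₂ ^ 2 - 4 * c₂)) ↔
      (c₁ - c₂) ^ 2 + (b₁ - b₂) * (b₁ * c₂ - b₂ * c₁) ≠ 0 := by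
    rw [Ne, ← sub_eq_zero, hres]
    simp [h2']
  rw [squarefree_mul_iff, isRelPrime_iff_isCoprime,
    isCoprime_iff_resultant_ne_zero
      (ne_zero_of_natDegree_gt (n := 1) (by rw [natDegree_X_sq_add_C_mul_X_add_C]; norm_num)),
    squarefree_iff_discr_ne_zero (hdeg b₁ c₁), squarefree_iff_discr_ne_zero (hdeg b₂ c₂),
    discr_X_sq_add_C_mul_X_add_C, discr_X_sq_add_C_mul_X_add_C, natDegree_X_sq_add_C_mul_X_add_C,
    natDegree_X_sq_add_C_mul_X_add_C, resultant_X_sq_add_C_mul_X_add_C, hB]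
  tauto

theorem squarefree_iff_discriminant_conditions {F : Type*} [Field F] [Fintype F]
    [DecidableEq F] (h2 : ringChar F ≠ 2) (h3 : ringChar F ≠ 3) (b₁ c₁ b₂ c₂ : F) :
    Squarefree ((X ^ 2 + C b₁ * X + C c₁) * (X ^ 2 + C b₂ * X + C c₂) : F[X]) ↔
      b₁ ^ 2 - 4 * c₁ ≠ 0 ∧ b₂ ^ 2 - 4 * c₂ ≠ 0 ∧
        (4 * (c₁ + c₂) - 2 * b₁ * b₂) ^ 2 ≠
          4 * ((b₁ ^ 2 - 4 * c₁) * (b₂ ^ 2 - 4 * c₂)) :=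
  squarefree_iff_discriminant_conditions_general h2 b₁ c₁ b₂ c₂
end

section
/- Let f*(x) = (x^2 - b x + c_1)(x^2 + b x + c_2) be a square-free quartic polynomial over F_q. Set Δ_1* = b^2 - 4c_1, Δ_2* = b^2 - 4c_2, and B* = 4(c_1 + c_2) + 2b^2. Then ∑_{x ∈ F_q} σ(f*(x)) = -1 + ∑_{x ∈ F_q} σ(x(x^2 + B* x + Δ_1* Δ_2*)). -/
/-!
Write the quartic as `x⁴ + px² + qx + r` and, for each `t`, as `(x² + t)² - Q_t(x)` with
`Q_t(x) = (2t - p)x² - qx + (t² - r)`. Then `1 + σ(f(x))`, the number of square roots of `f(x)`,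
is the number of `t` with `Q_t(x) = 0`; counting the pairs `(x, t)` by `t` instead, each quadratic
`Q_t` contributes `1 + σ(disc Q_t)`, which turns the sum into a character sum of the resolvent
cubic. For `f*` the resolvent has the root `-(c₁ + c₂)`; moving it to `0` gives `u(u² + au + β)`
with `β` the resultant of the two quadratic factors, and the 2-isogeny `x ↦ x + β/x` carries its
character sum to that of `x(x² - 2ax + a² - 4β) = x(x² + B*x + Δ₁*Δ₂*)`. Square-freeness excludes
the two degenerate cases `f* = (x² + e)²` and `β = 0`.
-/

open Polynomial Finset

namespace FiniteField

variable {F : Type*} [Field F] [Fintype F] [DecidableEq F]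

lemma card_sq_eq (hF : ringChar F ≠ 2) (a : F) :
    (#{x : F | x ^ 2 = a} : ℤ) = quadraticChar F a + 1 := by
  rw [← quadraticChar_card_sqrts hF a]
  simp

lemma card_quadratic_eq_zero_of_ne_zero (hF : ringChar F ≠ 2) {A : F} (hA : A ≠ 0) (B C : F) :
    (#{x : F | A * x ^ 2 + B * x + C = 0} : ℤ) = quadraticChar F (discrim A B C) + 1 := by
  have h2 : (2 : F) ≠ 0 := Ring.two_ne_zero hF
  have h4A : 4 * A ≠ 0 := mul_ne_zero (by simpa [show (4 : F) = 2 * 2 by norm_num]) hA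
  rw [← card_sq_eq hF, Nat.cast_inj]
  refine card_equiv ((Equiv.mulLeft₀ (2 * A) (mul_ne_zero h2 hA)).trans (Equiv.addRight B))
    fun x => ?_
  have hsq : (2 * A * x + B) ^ 2 - discrim A B C = 4 * A * (A * x ^ 2 + B * x + C) := by
    rw [discrim]; ring
  simp only [mem_filter, mem_univ, true_and, Equiv.trans_apply, Equiv.mulLeft₀_apply,
    Equiv.coe_addRight]
  rw [← sub_eq_zero (a := (2 * A * x + B) ^ 2), hsq, mul_eq_zero, or_iff_right h4A]

lemma card_quadratic_eq_zero (hF : ringChar F ≠ 2) {A B C : F}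
    (h : ¬(A = 0 ∧ B = 0 ∧ C = 0)) :
    (#{x : F | A * x ^ 2 + B * x + C = 0} : ℤ) =
      quadraticChar F (discrim A B C) + 1 - if A = 0 then 1 else 0 := by
  by_cases hA : A = 0
  · subst hA
    by_cases hB : B = 0
    · subst hB
      have hC : C ≠ 0 := fun hC => h ⟨rfl, rfl, hC⟩
      simp [discrim, hC]
    · have hroot : ({x : F | B * x + C = 0} : Finset F) = {-C / B} := by
        ext x
        simp only [mem_filter, mem_univ, true_and, mem_singleton]
        constructor <;> intro hx
        · field_simp; linear_combination hx
        · rw [hx]; field_simp; ring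
      simp [hroot, discrim, quadraticChar_sq_one' hB]
  · rw [card_quadratic_eq_zero_of_ne_zero hF hA, if_neg hA, sub_zero]

lemma one_add_quadraticChar_quartic_eq_card (hF : ringChar F ≠ 2) (p q r x : F) :
    1 + quadraticChar F (x ^ 4 + p * x ^ 2 + q * x + r) =
      (#{t : F | (2 * t - p) * x ^ 2 + -q * x + (t ^ 2 - r) = 0} : ℤ) := by
  rw [add_comm, ← card_sq_eq hF, Nat.cast_inj]
  refine card_equiv (Equiv.subRight (x ^ 2)) fun y => ?_
  simp only [mem_filter, mem_univ, true_and, Equiv.subRight_apply]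
  constructor <;> intro h <;> linear_combination h

theorem sum_quadraticChar_quartic (hF : ringChar F ≠ 2) {p q r : F}
    (hpqr : ¬(q = 0 ∧ p ^ 2 = 4 * r)) :
    ∑ x : F, quadraticChar F (x ^ 4 + p * x ^ 2 + q * x + r) =
      -1 + ∑ s : F, quadraticChar F (s ^ 3 + p * s ^ 2 - 4 * r * s + (q ^ 2 - 4 * p * r)) := by
  have h2 : (2 : F) ≠ 0 := Ring.two_ne_zero hF
  have hcount (t : F) :
      (#{x : F | (2 * t - p) * x ^ 2 + -q * x + (t ^ 2 - r) = 0} : ℤ) =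
        quadraticChar F ((-2 * t) ^ 3 + p * (-2 * t) ^ 2 - 4 * r * (-2 * t) + (q ^ 2 - 4 * p * r))
          + 1 - if 2 * t - p = 0 then 1 else 0 := by
    rw [card_quadratic_eq_zero hF, discrim]
    · ring_nf
    · rintro ⟨ht, hq, hr⟩
      exact hpqr ⟨neg_eq_zero.mp hq, by linear_combination (-(2 * t + p)) * ht + 4 * hr⟩
  have hdouble : ∑ x : F, (#{t : F | (2 * t - p) * x ^ 2 + -q * x + (t ^ 2 - r) = 0} : ℤ) =
      ∑ t : F, (#{x : F | (2 * t - p) * x ^ 2 + -q * x + (t ^ 2 - r) = 0} : ℤ) := by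
    exact_mod_cast sum_card_bipartiteAbove_eq_sum_card_bipartiteBelow
      (r := fun x t : F => (2 * t - p) * x ^ 2 + -q * x + (t ^ 2 - r) = 0)
  have hvertex : ∑ t : F, (if 2 * t - p = 0 then 1 else 0 : ℤ) = 1 := by
    rw [sum_boole, Nat.cast_eq_one, card_eq_one]
    refine ⟨p / 2, ?_⟩
    ext t
    simp only [mem_filter, mem_univ, true_and, mem_singleton]
    constructor <;> intro ht
    · field_simp; linear_combination ht
    · rw [ht]; field_simp; ring
  have hscale : ∑ t : F, quadraticChar F
      ((-2 * t) ^ 3 + p * (-2 * t) ^ 2 - 4 * r * (-2 * t) + (q ^ 2 - 4 * p * r)) =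
        ∑ s : F, quadraticChar F (s ^ 3 + p * s ^ 2 - 4 * r * s + (q ^ 2 - 4 * p * r)) :=
    Equiv.sum_comp (Equiv.mulLeft₀ (-2 : F) (neg_ne_zero.mpr h2))
      fun s => quadraticChar F (s ^ 3 + p * s ^ 2 - 4 * r * s + (q ^ 2 - 4 * p * r))
  have hpairs := calc
    ∑ x : F, (1 + quadraticChar F (x ^ 4 + p * x ^ 2 + q * x + r))
      = ∑ x : F, (#{t : F | (2 * t - p) * x ^ 2 + -q * x + (t ^ 2 - r) = 0} : ℤ) :=
        sum_congr rfl fun x _ => one_add_quadraticChar_quartic_eq_card hF p q r x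
    _ = ∑ t : F, (#{x : F | (2 * t - p) * x ^ 2 + -q * x + (t ^ 2 - r) = 0} : ℤ) := hdouble
    _ = ∑ t : F, (quadraticChar F
          ((-2 * t) ^ 3 + p * (-2 * t) ^ 2 - 4 * r * (-2 * t) + (q ^ 2 - 4 * p * r))
            + 1 - if 2 * t - p = 0 then 1 else 0) := sum_congr rfl fun t _ => hcount t
  simp only [sum_add_distrib, sum_sub_distrib, hvertex, hscale, sum_const, card_univ] at hpairs
  linarith

lemma sum_quadraticChar_add_eq_zero (hF : ringChar F ≠ 2) (a : F) :
    ∑ v : F, quadraticChar F (v + a) = 0 :=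
  (Equiv.sum_comp (Equiv.addRight a) (quadraticChar F)).trans (quadraticChar_sum_zero hF)

lemma card_add_div_eq (hF : ringChar F ≠ 2) {β : F} (hβ : β ≠ 0) (v : F) :
    (#{x ∈ univ.erase 0 | x + β / x = v} : ℤ) = quadraticChar F (v ^ 2 - 4 * β) + 1 := by
  have hfiber : (univ.erase 0).filter (fun x => x + β / x = v) =
      univ.filter (fun x : F => 1 * x ^ 2 + -v * x + β = 0) := by
    ext x
    simp only [mem_filter, mem_erase, mem_univ, and_true, true_and]
    constructor
    · rintro ⟨hx, hxv⟩
      field_simp at hxv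
      linear_combination hxv
    · intro hx
      have hx0 : x ≠ 0 := by
        rintro rfl
        exact hβ (by linear_combination hx)
      refine ⟨hx0, ?_⟩
      field_simp
      linear_combination hx
  rw [hfiber, card_quadratic_eq_zero_of_ne_zero hF one_ne_zero, discrim]
  ring_nf

theorem sum_quadraticChar_cubic_isogeny (hF : ringChar F ≠ 2) (a : F) {β : F} (hβ : β ≠ 0) :
    ∑ x : F, quadraticChar F (x * (x ^ 2 + a * x + β)) =
      ∑ x : F, quadraticChar F (x * (x ^ 2 - 2 * a * x + (a ^ 2 - 4 * β))) := by
  calc ∑ x : F, quadraticChar F (x * (x ^ 2 + a * x + β))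
      = ∑ x ∈ univ.erase 0, quadraticChar F (x + β / x + a) := by
        rw [← sum_erase univ (f := fun x => quadraticChar F (x * (x ^ 2 + a * x + β))) (a := 0)
          (by simp)]
        refine sum_congr rfl fun x hx => ?_
        have hx0 := ne_of_mem_erase hx
        rw [show x * (x ^ 2 + a * x + β) = x ^ 2 * (x + β / x + a) by field_simp; ring,
          map_mul, quadraticChar_sq_one' hx0, one_mul]
    _ = ∑ v : F, (#{x ∈ univ.erase 0 | x + β / x = v} : ℤ) * quadraticChar F (v + a) := by
        rw [← sum_fiberwise' (univ.erase 0) (fun x => x + β / x)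
          fun v => quadraticChar F (v + a)]
        simp only [sum_const, nsmul_eq_mul]
    _ = ∑ v : F, quadraticChar F ((v ^ 2 - 4 * β) * (v + a)) := by
        simp only [card_add_div_eq hF hβ, add_one_mul, sum_add_distrib,
          sum_quadraticChar_add_eq_zero hF, add_zero, map_mul]
    _ = ∑ x : F, quadraticChar F (x * (x ^ 2 - 2 * a * x + (a ^ 2 - 4 * β))) := by
        rw [← Equiv.sum_comp (Equiv.subRight a)]
        exact sum_congr rfl fun x _ => congrArg _ (by simp only [Equiv.subRight_apply]; ring)

end FiniteField

namespace Polynomial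

variable {K : Type*} [Field K]

lemma quadratic_mul_quadratic_eq (b c₁ c₂ : K) :
    (X ^ 2 - C b * X + C c₁) * (X ^ 2 + C b * X + C c₂) =
      X ^ 4 + C (c₁ + c₂ - b ^ 2) * X ^ 2 + C (b * (c₁ - c₂)) * X + C (c₁ * c₂) := by
  simp only [map_add, map_sub, map_mul, map_pow]
  ring

lemma not_isUnit_X_sq_add_C (e : K) : ¬IsUnit (X ^ 2 + C e) :=
  not_isUnit_of_natDegree_pos _ (by rw [natDegree_X_pow_add_C]; norm_num)

lemma not_sq_of_squarefree_quartic (h2 : (2 : K) ≠ 0) {p q r : K}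
    (hsf : Squarefree (X ^ 4 + C p * X ^ 2 + C q * X + C r)) : ¬(q = 0 ∧ p ^ 2 = 4 * r) := by
  rintro ⟨rfl, hr⟩
  obtain ⟨e, rfl⟩ : ∃ e, p = 2 * e := ⟨p / 2, by field_simp⟩
  have h4 : (4 : K) ≠ 0 := by simpa [show (4 : K) = 2 * 2 by norm_num] using mul_ne_zero h2 h2
  obtain rfl : r = e ^ 2 := mul_left_cancel₀ h4 (by linear_combination -hr)
  refine not_isUnit_X_sq_add_C e (hsf _ (dvd_of_eq ?_))
  simp only [map_mul, map_pow, map_zero, map_ofNat]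
  ring

lemma resultant_ne_zero_of_squarefree (h2 : (2 : K) ≠ 0) {b c₁ c₂ : K}
    (hsf : Squarefree ((X ^ 2 - C b * X + C c₁) * (X ^ 2 + C b * X + C c₂))) :
    (c₁ - c₂) ^ 2 + 2 * b ^ 2 * (c₁ + c₂) ≠ 0 := by
  intro hres
  by_cases hb : b = 0
  · subst hb
    obtain rfl : c₁ = c₂ := sub_eq_zero.mp (pow_eq_zero_iff two_ne_zero |>.mp
      (by linear_combination hres))
    exact not_isUnit_X_sq_add_C c₁ (hsf _ (by simp))
  · -- subtracting the two factors, a common root `z` satisfies `2bz = c₁ - c₂`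
    set z := (c₁ - c₂) / (2 * b)
    have hroot₁ : (X ^ 2 - C b * X + C c₁).IsRoot z := by
      simp only [IsRoot.def, eval_add, eval_sub, eval_mul, eval_pow, eval_X, eval_C, z]
      field_simp
      linear_combination hres
    have hroot₂ : (X ^ 2 + C b * X + C c₂).IsRoot z := by
      simp only [IsRoot.def, eval_add, eval_mul, eval_pow, eval_X, eval_C, z]
      field_simp
      linear_combination hres
    exact not_isUnit_X_sub_C z
      (hsf _ (mul_dvd_mul (dvd_iff_isRoot.mpr hroot₁) (dvd_iff_isRoot.mpr hroot₂)))

end Polynomial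

theorem balanced_quartic_descent_general {F : Type*} [Field F] [Fintype F] [DecidableEq F]
    (h2 : ringChar F ≠ 2) (b c₁ c₂ : F)
    (hsf : Squarefree ((X ^ 2 - C b * X + C c₁) * (X ^ 2 + C b * X + C c₂) : F[X])) :
    ∑ x : F, quadraticChar F ((x ^ 2 - b * x + c₁) * (x ^ 2 + b * x + c₂)) =
      -1 + ∑ x : F, quadraticChar F
        (x * (x ^ 2 + (4 * (c₁ + c₂) + 2 * b ^ 2) * x +
          (b ^ 2 - 4 * c₁) * (b ^ 2 - 4 * c₂))) := by
  have h2' : (2 : F) ≠ 0 := Ring.two_ne_zero h2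
  have hnd := not_sq_of_squarefree_quartic h2' (quadratic_mul_quadratic_eq b c₁ c₂ ▸ hsf)
  have hres := resultant_ne_zero_of_squarefree h2' hsf
  set a := -(2 * (c₁ + c₂) + b ^ 2)
  set β := (c₁ - c₂) ^ 2 + 2 * b ^ 2 * (c₁ + c₂)
  calc ∑ x : F, quadraticChar F ((x ^ 2 - b * x + c₁) * (x ^ 2 + b * x + c₂))
      = ∑ x : F, quadraticChar F
          (x ^ 4 + (c₁ + c₂ - b ^ 2) * x ^ 2 + b * (c₁ - c₂) * x + c₁ * c₂) :=
        sum_congr rfl fun x _ => congrArg _ (by ring)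
    _ = -1 + ∑ s : F, quadraticChar F
          (s ^ 3 + (c₁ + c₂ - b ^ 2) * s ^ 2 - 4 * (c₁ * c₂) * s
            + ((b * (c₁ - c₂)) ^ 2 - 4 * (c₁ + c₂ - b ^ 2) * (c₁ * c₂))) :=
        FiniteField.sum_quadraticChar_quartic h2 hnd
    _ = -1 + ∑ u : F, quadraticChar F (u * (u ^ 2 + a * u + β)) := by
        rw [← Equiv.sum_comp (Equiv.subRight (c₁ + c₂))]
        refine congrArg _ (sum_congr rfl fun u _ => congrArg _ ?_)
        simp only [Equiv.subRight_apply, a, β]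
        ring
    _ = -1 + ∑ x : F, quadraticChar F (x * (x ^ 2 - 2 * a * x + (a ^ 2 - 4 * β))) := by
        rw [FiniteField.sum_quadraticChar_cubic_isogeny h2 a hres]
    _ = _ := congrArg _ (sum_congr rfl fun x _ => congrArg _ (by ring))

theorem balanced_quartic_descent {F : Type*} [Field F] [Fintype F] [DecidableEq F]
    (h2 : ringChar F ≠ 2) (h3 : ringChar F ≠ 3) (b c₁ c₂ : F)
    (hsf : Squarefree ((X ^ 2 - C b * X + C c₁) * (X ^ 2 + C b * X + C c₂) : F[X])) :
    ∑ x : F, quadraticChar F ((x ^ 2 - b * x + c₁) * (x ^ 2 + b * x + c₂)) =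
      -1 + ∑ x : F, quadraticChar F
        (x * (x ^ 2 + (4 * (c₁ + c₂) + 2 * b ^ 2) * x +
          (b ^ 2 - 4 * c₁) * (b ^ 2 - 4 * c₂))) :=
  balanced_quartic_descent_general h2 b c₁ c₂ hsf
end
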